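/- For the weak call-by-need calculus, t ⇒_{id(x)} t holds (via the inductive reduction rules) if and only if there exists an evaluation context E such that t = E[[x]] (x plugged without capture); moreover t ⇒_{sub(x,v)} t' if and only if there exists an evaluation context E with t = E[[x]] and t' = E[[v]]. -/

import Mathlib

inductive Tm : Type
  | var : ℕ → Tm
  | lam : ℕ → Tm → Tm
  | app : Tm → Tm → Tm
  | es  : ℕ → Tm → Tm → Tm
  deriving DecidableEq

/-- Rule kinds: dB, lsv, the probe id(x), and the substitution sub(x,v). -/
inductive Rule : Type
  | db : Rule
  | lsv : Rule
  | idr : ℕ → Rule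
  | sub : ℕ → Tm → Rule

/-- A value is a λ-abstraction. -/
def IsValue : Tm → Prop := fun t => ∃ x b, t = .lam x b

/-- Auxiliary dB reduction: (dB-base) `(λx.t) u ↝ t[x\u]`;
(dB-σ) if `t u ↝ s` then `t[x\w] u ↝ s[x\w]`. -/
inductive AuxDB : Tm → Tm → Prop
  | base (x : ℕ) (t u : Tm) : AuxDB (.app (.lam x t) u) (.es x t u)
  | sigma {t u s : Tm} (x : ℕ) (w : Tm) :
      AuxDB (.app t u) s → AuxDB (.app (.es x t w) u) (.es x s w)

mutual
/-- Inductive presentation of weak call-by-need reduction `t ⇒_ρ t'`. -/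
inductive Red : Rule → Tm → Tm → Prop
  | appLeft {ρ t t'} (u : Tm) : Red ρ t t' → Red ρ (.app t u) (.app t' u)
  | esLeft {ρ t t'} (x : ℕ) (u : Tm) : Red ρ t t' → Red ρ (.es x t u) (.es x t' u)
  | esRight {ρ u u'} (x : ℕ) (t : Tm) :
      Red (.idr x) t t → Red ρ u u' → Red ρ (.es x t u) (.es x t u')
  | idr (x : ℕ) : Red (.idr x) (.var x) (.var x)
  | sub (x : ℕ) (v : Tm) : Red (.sub x v) (.var x) v
  | db {t t'} : AuxDB t t' → Red .db t t'
  | lsv {t t'} : AuxLSV t t' → Red .lsv t t'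

/-- Auxiliary lsv reduction. -/
inductive AuxLSV : Tm → Tm → Prop
  | base {t t'} (x : ℕ) {v : Tm} :
      Red (.sub x v) t t' → IsValue v → AuxLSV (.es x t v) (.es x t' v)
  | sigma {t u t'} (x y : ℕ) (w : Tm) :
      AuxLSV (.es x t u) t' → AuxLSV (.es x t (.es y u w)) (.es y t' w)
end

/-- Evaluation contexts `E ::= • | E u | E[x\u] | E₁[[x]][x\E₂]`. -/
inductive ECtx : Type
  | hole : ECtx
  | appL : ECtx → Tm → ECtx
  | esL : ECtx → ℕ → Tm → ECtx
  | esR : ECtx → ℕ → ECtx → ECtx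

/-- Plugging a term in the hole of an evaluation context. -/
def ECtx.plug : ECtx → Tm → Tm
  | .hole, t => t
  | .appL E u, t => .app (E.plug t) u
  | .esL E x u, t => .es x (E.plug t) u
  | .esR E₁ x E₂, t => .es x (E₁.plug (.var x)) (E₂.plug t)

/-- `t L` : a list of explicit substitutions applied to `t`. -/
def applyL (t : Tm) (L : List (ℕ × Tm)) : Tm :=
  L.foldl (fun s p => .es p.1 s p.2) t

/-- The base rule `(λx.t)L u ↦_dB t[x\u]L` of the context-based presentation. -/
def MapsDB (r r' : Tm) : Prop :=
  ∃ x s L u, r = .app (applyL (.lam x s) L) u ∧ r' = applyL (.es x s u) L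

namespace ECtx

theorem red_idr_plug (E : ECtx) (y : ℕ) :
    Red (.idr y) (E.plug (.var y)) (E.plug (.var y)) := by
  induction E generalizing y with
  | hole => exact .idr y
  | appL E u ih => exact .appLeft u (ih y)
  | esL E z u ih => exact .esLeft z u (ih y)
  | esR E₁ z E₂ ih₁ ih₂ => exact .esRight z _ (ih₁ z) (ih₂ y)

theorem red_sub_plug (E : ECtx) (y : ℕ) (v : Tm) :
    Red (.sub y v) (E.plug (.var y)) (E.plug v) := by
  induction E with
  | hole => exact .sub y v
  | appL E u ih => exact .appLeft u ih
  | esL E z u ih => exact .esLeft z u ih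
  | esR E₁ z E₂ _ ih₂ => exact .esRight z _ (E₁.red_idr_plug z) ih₂

end ECtx

namespace Red

-- Induction on the term, since `induction` does not handle the mutual block of `Red` and `AuxLSV`.
theorem exists_ectx_of_idr {y : ℕ} {t t' : Tm} (h : Red (.idr y) t t') :
    ∃ E : ECtx, t = E.plug (.var y) ∧ t' = E.plug (.var y) := by
  induction t generalizing y t' with
  | var z => cases h; exact ⟨.hole, rfl, rfl⟩
  | lam => cases h
  | app a u iha =>
    cases h with
    | appLeft _ ha =>
      obtain ⟨E, rfl, rfl⟩ := iha ha
      exact ⟨.appL E u, rfl, rfl⟩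
  | es z a u iha ihu =>
    cases h with
    | esLeft _ _ ha =>
      obtain ⟨E, rfl, rfl⟩ := iha ha
      exact ⟨.esL E z u, rfl, rfl⟩
    | esRight _ _ hz hu =>
      obtain ⟨E₁, rfl, -⟩ := iha hz
      obtain ⟨E₂, rfl, rfl⟩ := ihu hu
      exact ⟨.esR E₁ z E₂, rfl, rfl⟩

theorem exists_ectx_of_sub {y : ℕ} {v t t' : Tm} (h : Red (.sub y v) t t') :
    ∃ E : ECtx, t = E.plug (.var y) ∧ t' = E.plug v := by
  induction t generalizing t' with
  | var z => cases h; exact ⟨.hole, rfl, rfl⟩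
  | lam => cases h
  | app a u iha =>
    cases h with
    | appLeft _ ha =>
      obtain ⟨E, rfl, rfl⟩ := iha ha
      exact ⟨.appL E u, rfl, rfl⟩
  | es z a u iha ihu =>
    cases h with
    | esLeft _ _ ha =>
      obtain ⟨E, rfl, rfl⟩ := iha ha
      exact ⟨.esL E z u, rfl, rfl⟩
    | esRight _ _ hz hu =>
      obtain ⟨E₁, rfl, -⟩ := exists_ectx_of_idr hz
      obtain ⟨E₂, rfl, rfl⟩ := ihu hu
      exact ⟨.esR E₁ z E₂, rfl, rfl⟩

end Red

/-- characterization of the probe `id(x)` and of `sub(x,v)`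
in terms of evaluation contexts. -/
theorem red_id_sub_iff_ectx (x : ℕ) (v : Tm) (hv : IsValue v) :
    (∀ t : Tm, Red (.idr x) t t ↔ ∃ E : ECtx, t = E.plug (.var x)) ∧
    (∀ t t' : Tm, Red (.sub x v) t t' ↔
      ∃ E : ECtx, t = E.plug (.var x) ∧ t' = E.plug v) := by
  refine ⟨fun t => ⟨fun h => ?_, ?_⟩, fun t t' => ⟨Red.exists_ectx_of_sub, ?_⟩⟩
  · obtain ⟨E, hE, -⟩ := h.exists_ectx_of_idr
    exact ⟨E, hE⟩
  · rintro ⟨E, rfl⟩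
    exact E.red_idr_plug x
  · rintro ⟨E, rfl, rfl⟩
    exact E.red_sub_plug x v
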